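/- arXiv:0711.1769 — 2 statements merged into one kernel-verified Lean document; each statement's English description precedes it below -/
import Mathlib

section
/- Let S = k[x_1,…,x_n] be a polynomial ring over a field k and let I be a constructible monomial ideal of S generated in degree q. Then I has a q-linear resolution. -/
open MvPolynomial

/-- The recursive definition of a constructible monomial ideal generated in degree `q`:
(i) any principal monomial ideal is constructible (in the degree of its generator);
(ii) if `I₁`, `I₂` are constructible ideals generated in degree `q` and `I₁ ⊓ I₂` is a
constructible ideal generated in degree `q + 1`, then `I₁ + I₂` is constructible. -/
inductive IsConstructibleIdeal (k : Type) [Field k] {σ : Type} :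
    Ideal (MvPolynomial σ k) → ℕ → Prop
  | principal (b : σ →₀ ℕ) :
      IsConstructibleIdeal k (Ideal.span {monomial b (1 : k)}) (b.sum fun _ e => e)
  | sum (I₁ I₂ : Ideal (MvPolynomial σ k)) (q : ℕ) :
      IsConstructibleIdeal k I₁ q → IsConstructibleIdeal k I₂ q →
      IsConstructibleIdeal k (I₁ ⊓ I₂) (q + 1) →
      IsConstructibleIdeal k (I₁ + I₂) q

/-- `I` has a `q`-linear resolution: there is a graded free resolution
`⋯ → F_{i+1} → F_i → ⋯ → F_0 → I → 0` in which `F_i` is free with basis in degree `q + i`,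
i.e. the augmentation sends basis elements to homogeneous polynomials of degree `q` and all
matrix entries of the differentials are homogeneous (linear forms) of degree `1`. -/
def HasLinearResolution (n : ℕ) (k : Type) [Field k]
    (I : Ideal (MvPolynomial (Fin n) k)) (q : ℕ) : Prop :=
  ∃ (ι : ℕ → Type)
    (d : ∀ i, ((ι (i + 1)) →₀ MvPolynomial (Fin n) k) →ₗ[MvPolynomial (Fin n) k]
      ((ι i) →₀ MvPolynomial (Fin n) k))
    (ε : ((ι 0) →₀ MvPolynomial (Fin n) k) →ₗ[MvPolynomial (Fin n) k] MvPolynomial (Fin n) k),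
      LinearMap.range ε = I ∧
      (∀ j : ι 0, (ε (Finsupp.single j 1)).IsHomogeneous q) ∧
      (∀ i (j : ι (i + 1)) (j' : ι i), ((d i (Finsupp.single j 1)) j').IsHomogeneous 1) ∧
      (∀ i, LinearMap.range (d (i + 1)) = LinearMap.ker (d i)) ∧
      LinearMap.range (d 0) = LinearMap.ker ε

/-!
Constructible ideals are built from principal monomial ideals, resolved by `0 → S(-q) → I → 0`,
through the step `I₁, I₂ ↦ I₁ + I₂`, for which `0 → I₁ ∩ I₂ → I₁ ⊕ I₂ → I₁ + I₂ → 0` is exact.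
Given linear resolutions `A`, `B` of `I₁`, `I₂` (generated in degree `q`) and `C` of `I₁ ∩ I₂`
(generated in degree `q + 1`), the inclusions lift to chain maps `C → A` and `C → B` given by
matrices of linear forms: a homogeneous element in the image of a map of graded free modules has a
homogeneous preimage of the expected degree, obtained by taking homogeneous components entrywise.
The mapping cone of `C → A ⊕ B`, with `F_i = A_i ⊕ B_i ⊕ C_{i-1}`, then resolves `I₁ + I₂`, and its
differentials are again matrices of linear forms.
-/

open LinearMap

noncomputable section

namespace MvPolynomial

variable {σ R α β : Type*} [CommSemiring R] {e : ℕ}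

theorem homogeneousComponent_add_mul_of_isHomogeneous {h : MvPolynomial σ R}
    (hh : h.IsHomogeneous e) (m : ℕ) (c : MvPolynomial σ R) :
    homogeneousComponent (m + e) (c * h) = homogeneousComponent m c * h := by
  let := gradedAlgebra (σ := σ) (R := R)
  have := DirectSum.coe_decompose_mul_of_right_mem_of_le (homogeneousSubmodule σ R) (a := c)
    ((mem_homogeneousSubmodule e h).2 hh) (Nat.le_add_left e m)
  rw [Nat.add_sub_cancel] at this
  rwa [← decomposition.decompose'_apply, ← decomposition.decompose'_apply]

theorem homogeneousComponent_add_linearMap_apply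
    (ℓ : (α →₀ MvPolynomial σ R) →ₗ[MvPolynomial σ R] MvPolynomial σ R)
    (hℓ : ∀ a, (ℓ (Finsupp.single a 1)).IsHomogeneous e) (m : ℕ) (v : α →₀ MvPolynomial σ R) :
    homogeneousComponent (m + e) (ℓ v) = ℓ (v.mapRange (homogeneousComponent m) (map_zero _)) := by
  have expand (w : α →₀ MvPolynomial σ R) : ℓ w = w.sum fun a r => r * ℓ (Finsupp.single a 1) := by
    conv_lhs => rw [← w.sum_single]
    simp only [map_finsuppSum, ← smul_eq_mul, ← map_smul, Finsupp.smul_single_one]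
  rw [expand, expand, map_finsuppSum, Finsupp.sum_mapRange_index fun _ => zero_mul _]
  simp only [homogeneousComponent_add_mul_of_isHomogeneous (hℓ _)]

theorem isHomogeneous_linearMap_apply
    (ℓ : (α →₀ MvPolynomial σ R) →ₗ[MvPolynomial σ R] MvPolynomial σ R)
    (hℓ : ∀ a, (ℓ (Finsupp.single a 1)).IsHomogeneous e) {m : ℕ} {v : α →₀ MvPolynomial σ R}
    (hv : ∀ a, (v a).IsHomogeneous m) : (ℓ v).IsHomogeneous (m + e) := by
  have hv' : v.mapRange (homogeneousComponent m) (map_zero _) = v :=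
    Finsupp.ext fun a => homogeneousComponent_eq_self (hv a)
  rw [← hv', ← homogeneousComponent_add_linearMap_apply ℓ hℓ]
  exact homogeneousComponent_isHomogeneous _ _

theorem mapRange_homogeneousComponent_add_linearMap_apply
    (T : (α →₀ MvPolynomial σ R) →ₗ[MvPolynomial σ R] (β →₀ MvPolynomial σ R))
    (hT : ∀ a b, (T (Finsupp.single a 1) b).IsHomogeneous e) (m : ℕ)
    (v : α →₀ MvPolynomial σ R) :
    (T v).mapRange (homogeneousComponent (m + e)) (map_zero _) =
      T (v.mapRange (homogeneousComponent m) (map_zero _)) :=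
  Finsupp.ext fun b =>
    homogeneousComponent_add_linearMap_apply (Finsupp.lapply b ∘ₗ T) (hT · b) m v

theorem exists_isHomogeneous_preimage_of_mem_range
    (ℓ : (α →₀ MvPolynomial σ R) →ₗ[MvPolynomial σ R] MvPolynomial σ R)
    (hℓ : ∀ a, (ℓ (Finsupp.single a 1)).IsHomogeneous e) {m : ℕ} {w : MvPolynomial σ R}
    (hw : w ∈ range ℓ) (hwh : w.IsHomogeneous (m + e)) :
    ∃ v, ℓ v = w ∧ ∀ a, (v a).IsHomogeneous m := by
  obtain ⟨v, rfl⟩ := hw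
  refine ⟨v.mapRange (homogeneousComponent m) (map_zero _), ?_,
    fun a => homogeneousComponent_isHomogeneous _ _⟩
  rw [← homogeneousComponent_add_linearMap_apply ℓ hℓ, homogeneousComponent_eq_self hwh]

theorem exists_isHomogeneous_preimage_of_mem_range_finsupp
    (T : (α →₀ MvPolynomial σ R) →ₗ[MvPolynomial σ R] (β →₀ MvPolynomial σ R))
    (hT : ∀ a b, (T (Finsupp.single a 1) b).IsHomogeneous e) {m : ℕ} {w : β →₀ MvPolynomial σ R}
    (hw : w ∈ range T) (hwh : ∀ b, (w b).IsHomogeneous (m + e)) :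
    ∃ v, T v = w ∧ ∀ a, (v a).IsHomogeneous m := by
  obtain ⟨v, rfl⟩ := hw
  refine ⟨v.mapRange (homogeneousComponent m) (map_zero _), ?_,
    fun a => homogeneousComponent_isHomogeneous _ _⟩
  rw [← mapRange_homogeneousComponent_add_linearMap_apply T hT]
  exact Finsupp.ext fun b => homogeneousComponent_eq_self (hwh b)

end MvPolynomial

theorem Finsupp.exists_comp_eq_of_forall_exists {S M γ α : Type*} [Semiring S] [AddCommMonoid M]
    [Module S M] {T : (α →₀ S) →ₗ[S] M} {G : (γ →₀ S) →ₗ[S] M} {P : γ → (α →₀ S) → Prop}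
    (h : ∀ c, ∃ v, T v = G (Finsupp.single c 1) ∧ P c v) :
    ∃ F : (γ →₀ S) →ₗ[S] (α →₀ S), T ∘ₗ F = G ∧ ∀ c, P c (F (Finsupp.single c 1)) := by
  choose v hTv hPv using h
  refine ⟨Finsupp.linearCombination S v, ?_, fun c => by simpa using hPv c⟩
  ext c
  simp [hTv]

theorem exists_seq_of_forall_exists {T : ℕ → Type*} {P : ∀ i, T i → Prop}
    {Q : ∀ i, T i → T (i + 1) → Prop} (t₀ : T 0) (h₀ : P 0 t₀)
    (h : ∀ i t, P i t → ∃ t', P (i + 1) t' ∧ Q i t t') :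
    ∃ f : ∀ i, T i, f 0 = t₀ ∧ (∀ i, P i (f i)) ∧ ∀ i, Q i (f i) (f (i + 1)) := by
  choose g hgP hgQ using h
  let f (i : ℕ) : {t // P i t} := Nat.rec ⟨t₀, h₀⟩ (fun i t => ⟨g i t t.2, hgP i t t.2⟩) i
  exact ⟨fun i => (f i).1, rfl, fun i => (f i).2, fun i => hgQ i _ (f i).2⟩

theorem LinearMap.range_symm_comp_comp_eq_ker_comp {R M₁ M₂ M₃ N₁ N₂ : Type*} [CommRing R]
    [AddCommGroup M₁] [Module R M₁] [AddCommGroup M₂] [Module R M₂] [AddCommGroup M₃]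
    [Module R M₃] [AddCommGroup N₁] [Module R N₁] [AddCommGroup N₂] [Module R N₂]
    {D : M₁ →ₗ[R] M₂} {g : M₂ →ₗ[R] M₃} (h : range D = ker g) (e₁ : N₁ ≃ₗ[R] M₁)
    (e₂ : N₂ ≃ₗ[R] M₂) :
    range (e₂.symm.toLinearMap ∘ₗ D ∘ₗ e₁.toLinearMap) = ker (g ∘ₗ e₂.toLinearMap) := by
  rw [← comp_assoc, LinearEquiv.range_comp, range_comp, h, ker_comp,
    Submodule.map_equiv_eq_comap_symm, LinearEquiv.symm_symm]

structure FreeResolution {S : Type*} [CommRing S] (I : Ideal S) where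
  ι : ℕ → Type
  d : ∀ i, (ι (i + 1) →₀ S) →ₗ[S] (ι i →₀ S)
  ε : (ι 0 →₀ S) →ₗ[S] S
  range_ε : range ε = I
  range_d_zero : range (d 0) = ker ε
  range_d_succ : ∀ i, range (d (i + 1)) = ker (d i)

namespace FreeResolution

variable {S : Type*} [CommRing S] {I J : Ideal S}

theorem ε_mem (A : FreeResolution I) (x : A.ι 0 →₀ S) : A.ε x ∈ I := by
  simpa only [A.range_ε] using mem_range_self A.ε x

theorem ε_d_apply (A : FreeResolution I) (x : A.ι 1 →₀ S) : A.ε (A.d 0 x) = 0 := by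
  rw [← mem_ker, ← A.range_d_zero]
  exact mem_range_self _ _

theorem d_d_apply (A : FreeResolution I) (i : ℕ) (x : A.ι (i + 2) →₀ S) :
    A.d i (A.d (i + 1) x) = 0 := by
  rw [← mem_ker, ← A.range_d_succ]
  exact mem_range_self _ _

structure Hom (C : FreeResolution J) (A : FreeResolution I) where
  f : ∀ i, (C.ι i →₀ S) →ₗ[S] (A.ι i →₀ S)
  ε_comp : A.ε ∘ₗ f 0 = C.ε
  d_comp : ∀ i, A.d i ∘ₗ f (i + 1) = f i ∘ₗ C.d i

theorem Hom.ε_f_apply {C : FreeResolution J} {A : FreeResolution I} (φ : C.Hom A)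
    (x : C.ι 0 →₀ S) : A.ε (φ.f 0 x) = C.ε x :=
  LinearMap.congr_fun φ.ε_comp x

theorem Hom.d_f_apply {C : FreeResolution J} {A : FreeResolution I} (φ : C.Hom A) (i : ℕ)
    (x : C.ι (i + 1) →₀ S) : A.d i (φ.f (i + 1) x) = φ.f i (C.d i x) :=
  LinearMap.congr_fun (φ.d_comp i) x

def principalIndex : ℕ → Type
  | 0 => Unit
  | _ + 1 => Empty

instance : Unique (principalIndex 0) := inferInstanceAs (Unique Unit)

instance (i : ℕ) : IsEmpty (principalIndex (i + 1)) := inferInstanceAs (IsEmpty Empty)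

def ofNonZeroDivisor (f : S) (hf : f ∈ nonZeroDivisors S) :
    FreeResolution (Ideal.span {f}) where
  ι := principalIndex
  d _ := 0
  ε := Finsupp.linearCombination S fun _ => f
  range_ε := by rw [Finsupp.range_linearCombination, Set.range_const]
  range_d_zero := by
    rw [range_zero, eq_comm, ker_eq_bot']
    intro v hv
    rw [Finsupp.linearCombination_unique, smul_eq_mul,
      mul_right_mem_nonZeroDivisors_eq_zero_iff hf] at hv
    exact Finsupp.unique_ext hv
  range_d_succ _ := Subsingleton.elim _ _

theorem ofNonZeroDivisor_ε_single (f : S) (hf : f ∈ nonZeroDivisors S)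
    (j : (ofNonZeroDivisor f hf).ι 0) :
    (ofNonZeroDivisor f hf).ε (Finsupp.single j 1) = f :=
  (Finsupp.linearCombination_single _ _ _).trans (one_smul _ _)

def shiftIndex (ι : ℕ → Type) : ℕ → Type
  | 0 => Empty
  | i + 1 => ι i

instance (ι : ℕ → Type) : IsEmpty (shiftIndex ι 0) := inferInstanceAs (IsEmpty Empty)

/-- The identity. Spelling out the definitional equality `shiftIndex ι (i + 1) = ι i` as a map
keeps terms syntactically well typed, which `simp` needs. -/
def unshift (ι : ℕ → Type) (i : ℕ) : (shiftIndex ι (i + 1) →₀ S) ≃ₗ[S] (ι i →₀ S) :=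
  LinearEquiv.refl S _

theorem unshift_single (ι : ℕ → Type) (i : ℕ) (c : shiftIndex ι (i + 1)) (r : S) :
    unshift ι i (Finsupp.single c r) = Finsupp.single (α := ι i) c r := rfl

def shiftNegD (C : FreeResolution J) : ∀ i, (C.ι i →₀ S) →ₗ[S] (shiftIndex C.ι i →₀ S)
  | 0 => 0
  | i + 1 => -((unshift C.ι i).symm.toLinearMap ∘ₗ C.d i)

@[simp]
theorem unshift_shiftNegD (C : FreeResolution J) (i : ℕ) (x : C.ι (i + 1) →₀ S) :
    unshift C.ι i (C.shiftNegD (i + 1) x) = -C.d i x := rfl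

theorem shiftNegD_succ_apply (C : FreeResolution J) (i : ℕ) (x : C.ι (i + 1) →₀ S) :
    C.shiftNegD (i + 1) x = -(unshift C.ι i).symm (C.d i x) := rfl

theorem shiftNegD_d_apply (C : FreeResolution J) (i : ℕ) (x : C.ι (i + 1) →₀ S) :
    C.shiftNegD i (C.d i x) = 0 := by
  cases i with
  | zero => exact Subsingleton.elim _ _
  | succ i => rw [shiftNegD_succ_apply, d_d_apply, map_zero, neg_zero]

section Cone

variable {I₁ I₂ : Ideal S} {A : FreeResolution I₁} {B : FreeResolution I₂}
  {C : FreeResolution (I₁ ⊓ I₂)}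

abbrev ConeTerm (A : FreeResolution I₁) (B : FreeResolution I₂) (C : FreeResolution (I₁ ⊓ I₂))
    (i : ℕ) : Type _ :=
  (A.ι i →₀ S) × (B.ι i →₀ S) × (shiftIndex C.ι i →₀ S)

def coneD (φ : C.Hom A) (ψ : C.Hom B) (i : ℕ) : ConeTerm A B C (i + 1) →ₗ[S] ConeTerm A B C i :=
  let c : ConeTerm A B C (i + 1) →ₗ[S] (C.ι i →₀ S) :=
    (unshift C.ι i).toLinearMap ∘ₗ snd _ _ _ ∘ₗ snd _ _ _
  (A.d i ∘ₗ fst _ _ _ + φ.f i ∘ₗ c).prod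
    ((B.d i ∘ₗ fst _ _ _ ∘ₗ snd _ _ _ + ψ.f i ∘ₗ c).prod (C.shiftNegD i ∘ₗ c))

@[simp]
theorem coneD_apply (φ : C.Hom A) (ψ : C.Hom B) (i : ℕ) (x : ConeTerm A B C (i + 1)) :
    coneD φ ψ i x = (A.d i x.1 + φ.f i (unshift C.ι i x.2.2),
      B.d i x.2.1 + ψ.f i (unshift C.ι i x.2.2), C.shiftNegD i (unshift C.ι i x.2.2)) :=
  rfl

def coneε (A : FreeResolution I₁) (B : FreeResolution I₂) (C : FreeResolution (I₁ ⊓ I₂)) :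
    ConeTerm A B C 0 →ₗ[S] S :=
  A.ε ∘ₗ fst _ _ _ - B.ε ∘ₗ fst _ _ _ ∘ₗ snd _ _ _

@[simp]
theorem coneε_apply (x : ConeTerm A B C 0) : coneε A B C x = A.ε x.1 - B.ε x.2.1 := rfl

theorem range_coneε : range (coneε A B C) = I₁ ⊔ I₂ := by
  apply le_antisymm
  · rintro _ ⟨x, rfl⟩
    rw [coneε_apply]
    exact sub_mem (Submodule.mem_sup_left (A.ε_mem _)) (Submodule.mem_sup_right (B.ε_mem _))
  · rw [sup_le_iff]
    constructor
    · intro y hy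
      rw [← A.range_ε] at hy
      obtain ⟨f, rfl⟩ := hy
      exact ⟨(f, 0, 0), by simp⟩
    · intro y hy
      rw [← B.range_ε] at hy
      obtain ⟨g, rfl⟩ := hy
      exact ⟨(0, -g, 0), by simp⟩

theorem range_coneD_zero (φ : C.Hom A) (ψ : C.Hom B) :
    range (coneD φ ψ 0) = ker (coneε A B C) := by
  apply le_antisymm
  · rintro _ ⟨x, rfl⟩
    simp [ε_d_apply, φ.ε_f_apply, ψ.ε_f_apply]
  · rintro ⟨f, g, _⟩ hfg
    have hεfg : A.ε f = B.ε g := sub_eq_zero.mp hfg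
    obtain ⟨c, hc⟩ : A.ε f ∈ range C.ε := by
      rw [C.range_ε]
      exact ⟨A.ε_mem f, hεfg ▸ B.ε_mem g⟩
    obtain ⟨f', hf'⟩ : f - φ.f 0 c ∈ range (A.d 0) := by
      rw [A.range_d_zero, mem_ker, map_sub, φ.ε_f_apply, hc, sub_self]
    obtain ⟨g', hg'⟩ : g - ψ.f 0 c ∈ range (B.d 0) := by
      rw [B.range_d_zero, mem_ker, map_sub, ψ.ε_f_apply, hc, hεfg, sub_self]
    exact ⟨(f', g', (unshift C.ι 0).symm c), by simpa [hf', hg'] using Subsingleton.elim _ _⟩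

theorem coneD_coneD_apply (φ : C.Hom A) (ψ : C.Hom B) (i : ℕ) (x : ConeTerm A B C (i + 2)) :
    coneD φ ψ i (coneD φ ψ (i + 1) x) = 0 := by
  simp [d_d_apply, φ.d_f_apply, ψ.d_f_apply, shiftNegD_d_apply]

theorem mem_range_d_of_coneD_eq_zero (φ : C.Hom A) (ψ : C.Hom B) {i : ℕ}
    {x : ConeTerm A B C (i + 1)} (h : coneD φ ψ i x = 0) :
    unshift C.ι i x.2.2 ∈ range (C.d i) := by
  simp only [coneD_apply, Prod.mk_eq_zero] at h
  cases i with
  | zero =>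
    rw [C.range_d_zero, mem_ker, ← φ.ε_f_apply, eq_neg_of_add_eq_zero_right h.1, map_neg,
      ε_d_apply, neg_zero]
  | succ i =>
    rw [C.range_d_succ, mem_ker]
    simpa using congrArg (unshift C.ι i) h.2.2

theorem range_coneD_succ (φ : C.Hom A) (ψ : C.Hom B) (i : ℕ) :
    range (coneD φ ψ (i + 1)) = ker (coneD φ ψ i) := by
  refine le_antisymm (fun _ ⟨x, hx⟩ => hx ▸ coneD_coneD_apply φ ψ i x) fun x hx => ?_
  have h := mem_ker.mp hx
  obtain ⟨c, hc⟩ := mem_range_d_of_coneD_eq_zero φ ψ h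
  simp only [coneD_apply, Prod.mk_eq_zero] at h
  obtain ⟨f, hf⟩ : x.1 + φ.f (i + 1) c ∈ range (A.d (i + 1)) := by
    rw [A.range_d_succ, mem_ker, map_add, φ.d_f_apply, hc, h.1]
  obtain ⟨g, hg⟩ : x.2.1 + ψ.f (i + 1) c ∈ range (B.d (i + 1)) := by
    rw [B.range_d_succ, mem_ker, map_add, ψ.d_f_apply, hc, h.2.1]
  refine ⟨(f, g, (unshift C.ι (i + 1)).symm (-c)), ?_⟩
  simp [hf, hg, shiftNegD_succ_apply, hc]

def coneEquiv (A : FreeResolution I₁) (B : FreeResolution I₂) (C : FreeResolution (I₁ ⊓ I₂))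
    (i : ℕ) : ((A.ι i ⊕ B.ι i ⊕ shiftIndex C.ι i) →₀ S) ≃ₗ[S] ConeTerm A B C i :=
  Finsupp.sumFinsuppLEquivProdFinsupp S ≪≫ₗ
    (LinearEquiv.refl S _).prodCongr (Finsupp.sumFinsuppLEquivProdFinsupp S)

@[simp]
theorem coneEquiv_single_inl (i : ℕ) (a : A.ι i) (r : S) :
    coneEquiv A B C i (Finsupp.single (Sum.inl a) r) = (Finsupp.single a r, 0, 0) := by
  simp [coneEquiv]

@[simp]
theorem coneEquiv_single_inr_inl (i : ℕ) (b : B.ι i) (r : S) :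
    coneEquiv A B C i (Finsupp.single (Sum.inr (Sum.inl b)) r) = (0, Finsupp.single b r, 0) := by
  simp [coneEquiv]

@[simp]
theorem coneEquiv_single_inr_inr (i : ℕ) (c : shiftIndex C.ι i) (r : S) :
    coneEquiv A B C i (Finsupp.single (Sum.inr (Sum.inr c)) r) = (0, 0, Finsupp.single c r) := by
  simp [coneEquiv]

@[simp]
theorem coneEquiv_symm_apply_inl (i : ℕ) (x : ConeTerm A B C i) (a : A.ι i) :
    (coneEquiv A B C i).symm x (Sum.inl a) = x.1 a := rfl

@[simp]
theorem coneEquiv_symm_apply_inr_inl (i : ℕ) (x : ConeTerm A B C i) (b : B.ι i) :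
    (coneEquiv A B C i).symm x (Sum.inr (Sum.inl b)) = x.2.1 b := rfl

@[simp]
theorem coneEquiv_symm_apply_inr_inr (i : ℕ) (x : ConeTerm A B C i) (c : shiftIndex C.ι i) :
    (coneEquiv A B C i).symm x (Sum.inr (Sum.inr c)) = x.2.2 c := rfl

def cone (φ : C.Hom A) (ψ : C.Hom B) : FreeResolution (I₁ ⊔ I₂) where
  ι i := A.ι i ⊕ B.ι i ⊕ shiftIndex C.ι i
  d i := (coneEquiv A B C i).symm.toLinearMap ∘ₗ coneD φ ψ i ∘ₗ
    (coneEquiv A B C (i + 1)).toLinearMap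
  ε := coneε A B C ∘ₗ (coneEquiv A B C 0).toLinearMap
  range_ε := by rw [LinearEquiv.range_comp, range_coneε]
  range_d_zero := range_symm_comp_comp_eq_ker_comp (range_coneD_zero φ ψ) _ _
  range_d_succ i := range_symm_comp_comp_eq_ker_comp
    ((range_coneD_succ φ ψ i).trans (LinearEquiv.ker_comp (coneEquiv A B C i).symm _).symm) _ _

end Cone

end FreeResolution

structure LinearResolution {σ R : Type*} [CommRing R] (I : Ideal (MvPolynomial σ R)) (q : ℕ)
    extends FreeResolution I where
  isHomogeneous_ε : ∀ j, (ε (Finsupp.single j 1)).IsHomogeneous q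
  isHomogeneous_d : ∀ i j j', (d i (Finsupp.single j 1) j').IsHomogeneous 1

namespace LinearResolution

open FreeResolution

variable {σ R : Type*} [CommRing R] {I J : Ideal (MvPolynomial σ R)} {q : ℕ}

structure Hom (C : LinearResolution J (q + 1)) (A : LinearResolution I q) extends
    C.toFreeResolution.Hom A.toFreeResolution where
  isHomogeneous_f : ∀ i c a, (f i (Finsupp.single c 1) a).IsHomogeneous 1

def ofNonZeroDivisor (f : MvPolynomial σ R) (hf : f ∈ nonZeroDivisors _)
    (hfq : f.IsHomogeneous q) : LinearResolution (Ideal.span {f}) q where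
  toFreeResolution := FreeResolution.ofNonZeroDivisor f hf
  isHomogeneous_ε j := by rw [ofNonZeroDivisor_ε_single]; exact hfq
  isHomogeneous_d _ _ _ := isHomogeneous_zero _ _ _

def LiftsBoundaries (A : LinearResolution I q) (C : LinearResolution J (q + 1)) (i : ℕ)
    (F : (C.ι i →₀ MvPolynomial σ R) →ₗ[MvPolynomial σ R] (A.ι i →₀ MvPolynomial σ R)) : Prop :=
  (∀ c a, (F (Finsupp.single c 1) a).IsHomogeneous 1) ∧ range (F ∘ₗ C.d i) ≤ range (A.d i)

theorem exists_liftsBoundaries_zero (A : LinearResolution I q) (C : LinearResolution J (q + 1))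
    (hJI : J ≤ I) : ∃ F, A.ε ∘ₗ F = C.ε ∧ LiftsBoundaries A C 0 F := by
  obtain ⟨F, hFε, hF⟩ := Finsupp.exists_comp_eq_of_forall_exists fun c =>
    exists_isHomogeneous_preimage_of_mem_range A.ε A.isHomogeneous_ε
      (by rw [A.range_ε]; exact hJI (C.ε_mem _)) (by rw [add_comm 1 q]; exact C.isHomogeneous_ε c)
  refine ⟨F, hFε, hF, ?_⟩
  rintro _ ⟨x, rfl⟩
  rw [A.range_d_zero, mem_ker, comp_apply, ← comp_apply A.ε, hFε, C.ε_d_apply]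

theorem exists_liftsBoundaries_succ (A : LinearResolution I q) (C : LinearResolution J (q + 1))
    (i : ℕ) (F : (C.ι i →₀ MvPolynomial σ R) →ₗ[MvPolynomial σ R] (A.ι i →₀ MvPolynomial σ R))
    (hF : LiftsBoundaries A C i F) :
    ∃ F', LiftsBoundaries A C (i + 1) F' ∧ A.d i ∘ₗ F' = F ∘ₗ C.d i := by
  obtain ⟨F', hF'd, hF'⟩ := Finsupp.exists_comp_eq_of_forall_exists fun c =>
    exists_isHomogeneous_preimage_of_mem_range_finsupp (A.d i) (A.isHomogeneous_d i)
      (hF.2 (mem_range_self _ _))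
      fun a => isHomogeneous_linearMap_apply (Finsupp.lapply a ∘ₗ F) (hF.1 · a)
        (C.isHomogeneous_d i c)
  refine ⟨F', ⟨hF', ?_⟩, hF'd⟩
  rintro _ ⟨x, rfl⟩
  rw [A.range_d_succ, mem_ker, comp_apply, ← comp_apply (A.d i), hF'd, comp_apply,
    C.d_d_apply, map_zero]

theorem nonempty_hom (A : LinearResolution I q) (C : LinearResolution J (q + 1)) (hJI : J ≤ I) :
    Nonempty (C.Hom A) := by
  obtain ⟨F₀, hF₀ε, hF₀⟩ := exists_liftsBoundaries_zero A C hJI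
  obtain ⟨F, rfl, hF, hdF⟩ :=
    exists_seq_of_forall_exists F₀ hF₀ (exists_liftsBoundaries_succ A C)
  exact ⟨{ f := F, ε_comp := hF₀ε, d_comp := hdF, isHomogeneous_f := fun i => (hF i).1 }⟩

theorem isHomogeneous_shiftNegD (C : LinearResolution J q) (i : ℕ) (c : C.ι i)
    (x : shiftIndex C.ι i) : (C.shiftNegD i (Finsupp.single c 1) x).IsHomogeneous 1 := by
  cases i with
  | zero => exact isEmptyElim x
  | succ i =>
    rw [shiftNegD_succ_apply]
    exact (C.isHomogeneous_d i c x).neg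

section Cone

variable {I₁ I₂ : Ideal (MvPolynomial σ R)} {A : LinearResolution I₁ q}
  {B : LinearResolution I₂ q} {C : LinearResolution (I₁ ⊓ I₂) (q + 1)}

theorem isHomogeneous_coneε_single (j : A.ι 0 ⊕ B.ι 0 ⊕ shiftIndex C.ι 0) :
    (coneε A.1 B.1 C.1 (coneEquiv A.1 B.1 C.1 0 (Finsupp.single j 1))).IsHomogeneous q := by
  rcases j with a | b | c
  · simpa using A.isHomogeneous_ε a
  · simpa using (B.isHomogeneous_ε b).neg
  · exact isEmptyElim c

theorem isHomogeneous_coneD_single (φ : C.Hom A) (ψ : C.Hom B) (i : ℕ)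
    (j : A.ι (i + 1) ⊕ B.ι (i + 1) ⊕ shiftIndex C.ι (i + 1))
    (j' : A.ι i ⊕ B.ι i ⊕ shiftIndex C.ι i) :
    ((coneEquiv A.1 B.1 C.1 i).symm
      (coneD φ.1 ψ.1 i (coneEquiv A.1 B.1 C.1 (i + 1) (Finsupp.single j 1))) j').IsHomogeneous
        1 := by
  rcases j with a | b | c <;> rcases j' with a' | b' | c' <;>
    simp [isHomogeneous_zero, unshift_single, A.isHomogeneous_d, B.isHomogeneous_d]
  · exact φ.isHomogeneous_f i c a'
  · exact ψ.isHomogeneous_f i c b'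
  · exact C.isHomogeneous_shiftNegD i c c'

def cone (φ : C.Hom A) (ψ : C.Hom B) : LinearResolution (I₁ ⊔ I₂) q where
  toFreeResolution := FreeResolution.cone φ.toHom ψ.toHom
  isHomogeneous_ε := isHomogeneous_coneε_single
  isHomogeneous_d := isHomogeneous_coneD_single φ ψ

end Cone

theorem hasLinearResolution {n : ℕ} {k : Type} [Field k] {I : Ideal (MvPolynomial (Fin n) k)}
    {q : ℕ} (F : LinearResolution I q) : HasLinearResolution n k I q :=
  ⟨F.ι, F.d, F.ε, F.range_ε, F.isHomogeneous_ε, F.isHomogeneous_d, F.range_d_succ, F.range_d_zero⟩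

end LinearResolution

end

theorem IsConstructibleIdeal.nonempty_linearResolution {k σ : Type} [Field k]
    {I : Ideal (MvPolynomial σ k)} {q : ℕ} (h : IsConstructibleIdeal k I q) :
    Nonempty (LinearResolution I q) := by
  induction h with
  | principal b =>
    exact ⟨.ofNonZeroDivisor _ (mem_nonZeroDivisors_of_ne_zero (by simp))
      (isHomogeneous_monomial _ rfl)⟩
  | sum I₁ I₂ q _ _ _ ih₁ ih₂ ih₁₂ =>
    obtain ⟨A⟩ := ih₁
    obtain ⟨B⟩ := ih₂
    obtain ⟨C⟩ := ih₁₂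
    obtain ⟨φ⟩ := A.nonempty_hom C inf_le_left
    obtain ⟨ψ⟩ := B.nonempty_hom C inf_le_right
    rw [Submodule.add_eq_sup]
    exact ⟨.cone φ ψ⟩

/-- Every constructible monomial ideal of `S = k[x₁,…,xₙ]` generated in degree `q`
has a `q`-linear resolution. -/
theorem constructible_ideal_has_linear_resolution (n : ℕ) (k : Type) [Field k]
    (I : Ideal (MvPolynomial (Fin n) k)) (q : ℕ)
    (h : IsConstructibleIdeal k I q) : HasLinearResolution n k I q :=
  h.nonempty_linearResolution.elim LinearResolution.hasLinearResolution
end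

section
/- Let I be a constructible monomial ideal of S = k[x_1,…,x_n]. Then the polarization I^p of I is a square-free constructible monomial ideal (in the larger polynomial ring containing all the polarized variables). -/
/-!
Polarization `b ↦ b^p` is monotone for the componentwise order, preserves degree, and turns the
componentwise maximum (the exponent of `lcm`) into the maximum of the polarizations. Since the
intersection of monomial ideals is generated by the pairwise lcms of their generators, polarizing
generators commutes with both `+` and `⊓` of monomial ideals, so the recursion building `I`
transfers verbatim to `I^p`. Monotonicity is also what makes `I^p` independent of the monomial
generating set of `I` used to compute it.
-/

open MvPolynomial

/-- `I` is generated by square-free monomials. -/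
def IsSquarefreeMonomialIdeal (k : Type) [Field k] {σ : Type}
    (I : Ideal (MvPolynomial σ k)) : Prop :=
  ∃ G : Set (σ →₀ ℕ), (∀ b ∈ G, ∀ i, b i ≤ 1) ∧
    I = Ideal.span ((fun b => monomial b (1 : k)) '' G)

/-- The exponent vectors of the minimal monomial generators of a monomial ideal `I`:
those `b` with `x^b ∈ I` such that no proper monomial divisor of `x^b` lies in `I`. -/
def minGenExps (n : ℕ) (k : Type) [Field k] (I : Ideal (MvPolynomial (Fin n) k)) :
    Set (Fin n →₀ ℕ) :=
  {b | monomial b (1 : k) ∈ I ∧ ∀ b' : Fin n →₀ ℕ, b' < b → monomial b' (1 : k) ∉ I}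

/-- The polarization of the exponent vector `b`: the square-free exponent vector of
`u^p = ∏_{i=1}^n ∏_{j=1}^{b i} x_{ij}` in the polynomial ring on the variables `x_{ij}`. -/
noncomputable def polarizeExp (n : ℕ) (b : Fin n →₀ ℕ) : (Fin n × ℕ) →₀ ℕ :=
  ∑ i : Fin n, ∑ j ∈ Finset.range (b i), Finsupp.single (i, j) 1

/-- The polarization `I^p` of a monomial ideal `I`: the ideal of the polynomial ring
`k[x_{ij}]` generated by the polarizations of the minimal monomial generators of `I`. -/
noncomputable def polarizeIdeal (n : ℕ) (k : Type) [Field k]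
    (I : Ideal (MvPolynomial (Fin n) k)) : Ideal (MvPolynomial (Fin n × ℕ) k) :=
  Ideal.span ((fun b => monomial (polarizeExp n b) (1 : k)) '' minGenExps n k I)

section MonomialSpan

variable {σ R : Type*} [CommSemiring R]

variable (R) in
noncomputable def monomialSpan (G : Set (σ →₀ ℕ)) : Ideal (MvPolynomial σ R) :=
  Ideal.span ((fun b => monomial b (1 : R)) '' G)

theorem monomialSpan_singleton (b : σ →₀ ℕ) :
    monomialSpan R {b} = Ideal.span {monomial b (1 : R)} := by
  rw [monomialSpan, Set.image_singleton]

theorem monomialSpan_union (G₁ G₂ : Set (σ →₀ ℕ)) :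
    monomialSpan R (G₁ ∪ G₂) = monomialSpan R G₁ ⊔ monomialSpan R G₂ := by
  rw [monomialSpan, Set.image_union, Ideal.span_union]
  rfl

theorem monomial_mem_monomialSpan [Nontrivial R] {G : Set (σ →₀ ℕ)} {c : σ →₀ ℕ} :
    monomial c (1 : R) ∈ monomialSpan R G ↔ ∃ b ∈ G, b ≤ c := by
  classical
  simp [monomialSpan, mem_ideal_span_monomial_image, support_monomial]

theorem monomialSpan_le_monomialSpan [Nontrivial R] {G H : Set (σ →₀ ℕ)} :
    monomialSpan R G ≤ monomialSpan R H ↔ ∀ b ∈ G, ∃ c ∈ H, c ≤ b := by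
  simp only [monomialSpan, Ideal.span_le, Set.image_subset_iff]
  exact forall₂_congr fun _ _ => monomial_mem_monomialSpan

theorem monomialSpan_inf (G₁ G₂ : Set (σ →₀ ℕ)) :
    monomialSpan R G₁ ⊓ monomialSpan R G₂ = monomialSpan R (Set.image2 (· ⊔ ·) G₁ G₂) := by
  ext x
  simp only [monomialSpan, Ideal.mem_inf, mem_ideal_span_monomial_image]
  constructor
  · rintro ⟨h₁, h₂⟩ xi hxi
    obtain ⟨b₁, hb₁, hle₁⟩ := h₁ xi hxi
    obtain ⟨b₂, hb₂, hle₂⟩ := h₂ xi hxi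
    exact ⟨b₁ ⊔ b₂, Set.mem_image2_of_mem hb₁ hb₂, sup_le hle₁ hle₂⟩
  · intro h
    refine ⟨fun xi hxi => ?_, fun xi hxi => ?_⟩ <;>
      obtain ⟨_, ⟨b₁, hb₁, b₂, hb₂, rfl⟩, hle⟩ := h xi hxi
    · exact ⟨b₁, hb₁, le_sup_left.trans hle⟩
    · exact ⟨b₂, hb₂, le_sup_right.trans hle⟩

end MonomialSpan

theorem IsConstructibleIdeal.exists_eq_monomialSpan {k σ : Type} [Field k]
    {I : Ideal (MvPolynomial σ k)} {q : ℕ} (h : IsConstructibleIdeal k I q) :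
    ∃ G : Set (σ →₀ ℕ), I = monomialSpan k G := by
  induction h with
  | principal b => exact ⟨{b}, (monomialSpan_singleton b).symm⟩
  | sum _ _ _ _ _ _ ih₁ ih₂ _ =>
    obtain ⟨G₁, rfl⟩ := ih₁
    obtain ⟨G₂, rfl⟩ := ih₂
    exact ⟨G₁ ∪ G₂, by rw [monomialSpan_union, Submodule.add_eq_sup]⟩

theorem exists_mem_minGenExps_le {n : ℕ} {k : Type} [Field k]
    {I : Ideal (MvPolynomial (Fin n) k)} {c : Fin n →₀ ℕ} (hc : monomial c (1 : k) ∈ I) :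
    ∃ m ∈ minGenExps n k I, m ≤ c := by
  obtain ⟨m, ⟨hmc, hmI⟩, hmin⟩ :=
    wellFounded_lt.has_min {b | b ≤ c ∧ monomial b (1 : k) ∈ I} ⟨c, le_rfl, hc⟩
  exact ⟨m, ⟨hmI, fun b hbm hbI => hmin b ⟨hbm.le.trans hmc, hbI⟩ hbm⟩, hmc⟩

section Polarization

variable {n : ℕ}

theorem polarizeExp_apply (b : Fin n →₀ ℕ) (i : Fin n) (j : ℕ) :
    polarizeExp n b (i, j) = if j < b i then 1 else 0 := by
  classical
  simp only [polarizeExp, Finsupp.finsetSum_apply, Finsupp.single_apply, Prod.mk.injEq]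
  rw [Finset.sum_eq_single i (fun i' _ hi' => by simp [hi']) (by simp)]
  simp [Finset.sum_ite_eq', Finset.mem_range]

theorem polarizeExp_apply_le_one (b : Fin n →₀ ℕ) (x : Fin n × ℕ) : polarizeExp n b x ≤ 1 := by
  rw [polarizeExp_apply]
  split_ifs <;> simp

theorem polarizeExp_mono : Monotone (polarizeExp n) := fun a b h ⟨i, j⟩ => by
  simp only [polarizeExp_apply]
  have := h i
  split_ifs <;> omega

theorem polarizeExp_sup (a b : Fin n →₀ ℕ) :
    polarizeExp n (a ⊔ b) = polarizeExp n a ⊔ polarizeExp n b := by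
  ext ⟨i, j⟩
  simp only [Finsupp.sup_apply, polarizeExp_apply, max_def]
  split_ifs <;> omega

theorem degree_polarizeExp (b : Fin n →₀ ℕ) : (polarizeExp n b).degree = b.degree := by
  simp [polarizeExp, map_sum, Finsupp.degree_eq_sum b]

variable {k : Type} [Field k]

theorem polarizeIdeal_eq_monomialSpan (I : Ideal (MvPolynomial (Fin n) k)) :
    polarizeIdeal n k I = monomialSpan k (polarizeExp n '' minGenExps n k I) := by
  rw [polarizeIdeal, monomialSpan, Set.image_image]

theorem polarizeIdeal_monomialSpan (G : Set (Fin n →₀ ℕ)) :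
    polarizeIdeal n k (monomialSpan k G) = monomialSpan k (polarizeExp n '' G) := by
  rw [polarizeIdeal_eq_monomialSpan]
  apply le_antisymm <;> rw [monomialSpan_le_monomialSpan] <;> rintro _ ⟨c, hc, rfl⟩
  · obtain ⟨g, hg, hgc⟩ := monomial_mem_monomialSpan.mp hc.1
    exact ⟨_, Set.mem_image_of_mem _ hg, polarizeExp_mono hgc⟩
  · obtain ⟨m, hm, hmc⟩ := exists_mem_minGenExps_le
      (monomial_mem_monomialSpan (R := k) |>.mpr ⟨c, hc, le_rfl⟩)
    exact ⟨_, Set.mem_image_of_mem _ hm, polarizeExp_mono hmc⟩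

theorem polarizeIdeal_sup_monomialSpan (G₁ G₂ : Set (Fin n →₀ ℕ)) :
    polarizeIdeal n k (monomialSpan k G₁ ⊔ monomialSpan k G₂) =
      polarizeIdeal n k (monomialSpan k G₁) ⊔ polarizeIdeal n k (monomialSpan k G₂) := by
  simp only [← monomialSpan_union, polarizeIdeal_monomialSpan, Set.image_union]

theorem polarizeIdeal_inf_monomialSpan (G₁ G₂ : Set (Fin n →₀ ℕ)) :
    polarizeIdeal n k (monomialSpan k G₁ ⊓ monomialSpan k G₂) =
      polarizeIdeal n k (monomialSpan k G₁) ⊓ polarizeIdeal n k (monomialSpan k G₂) := by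
  simp only [monomialSpan_inf, polarizeIdeal_monomialSpan, Set.image_image2,
    Set.image2_image_left, Set.image2_image_right, polarizeExp_sup]

theorem isSquarefreeMonomialIdeal_polarizeIdeal (I : Ideal (MvPolynomial (Fin n) k)) :
    IsSquarefreeMonomialIdeal k (polarizeIdeal n k I) := by
  refine ⟨_, ?_, polarizeIdeal_eq_monomialSpan I⟩
  rintro _ ⟨b, -, rfl⟩
  exact polarizeExp_apply_le_one b

end Polarization

/-- The polarization of a constructible monomial ideal is a square-free constructible
monomial ideal (in the larger polynomial ring on the variables `x_{ij}`). -/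
theorem polarization_of_constructible (n : ℕ) (k : Type) [Field k]
    (I : Ideal (MvPolynomial (Fin n) k)) (q : ℕ)
    (h : IsConstructibleIdeal k I q) :
    IsConstructibleIdeal k (polarizeIdeal n k I) q ∧
      IsSquarefreeMonomialIdeal k (polarizeIdeal n k I) := by
  refine ⟨?_, isSquarefreeMonomialIdeal_polarizeIdeal I⟩
  induction h with
  | principal b =>
    rw [← monomialSpan_singleton, polarizeIdeal_monomialSpan, Set.image_singleton,
      monomialSpan_singleton]
    convert IsConstructibleIdeal.principal (polarizeExp n b) using 1
    exact (degree_polarizeExp b).symm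
  | sum I₁ I₂ q h₁ h₂ _ ih₁ ih₂ ih₃ =>
    obtain ⟨G₁, rfl⟩ := h₁.exists_eq_monomialSpan
    obtain ⟨G₂, rfl⟩ := h₂.exists_eq_monomialSpan
    rw [polarizeIdeal_inf_monomialSpan] at ih₃
    rw [Submodule.add_eq_sup, polarizeIdeal_sup_monomialSpan, ← Submodule.add_eq_sup]
    exact .sum _ _ q ih₁ ih₂ ih₃
end
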